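/- Let f : ℍ∖ℝ → ℍ be such that for every I ∈ 𝕊 the map g_I(x,y) := f(x + yI) is twice continuously differentiable on ℝ×(0,∞) and satisfies the slice Cauchy–Riemann equation ∂g_I/∂x + I·∂g_I/∂y = 0 on ℝ×(0,∞) (I acting by left multiplication), i.e. f is slice regular on ℍ∖ℝ. Then (□f)(q) = 0 for every q ∈ ℍ∖ℝ. -/

import Mathlib

open MeasureTheory Quaternion

noncomputable section

/-- the sliced operator `□` at `q = x + yI`, `x = Re q`, `y = |Im q|`, `I = Im q/|Im q|`;
the partial derivatives of the slice function `g_I(x,y) = f(x + yI)` are taken through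
the one-variable sections. -/
def Box (f : ℍ[ℝ] → ℍ[ℝ]) (q : ℍ[ℝ]) : ℍ[ℝ] :=
  let x : ℝ := q.re
  let y : ℝ := ‖q.im‖
  let I : ℍ[ℝ] := ‖q.im‖⁻¹ • q.im
  (-(1 / 4 : ℝ)) • (deriv (deriv fun u : ℝ => f ((u : ℍ[ℝ]) + y • I)) x +
      deriv (deriv fun v : ℝ => f ((x : ℍ[ℝ]) + v • I)) y) +
    (1 / 2 : ℝ) • (x • deriv (fun u : ℝ => f ((u : ℍ[ℝ]) + y • I)) x +
      y • deriv (fun v : ℝ => f ((x : ℍ[ℝ]) + v • I)) y) +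
    (1 / 2 : ℝ) • (I * (x • deriv (fun v : ℝ => f ((x : ℍ[ℝ]) + v • I)) y -
      y • deriv (fun u : ℝ => f ((u : ℍ[ℝ]) + y • I)) x))

/-!
Write `g(x, y) = f(x + yI)`. The slice Cauchy–Riemann equation `∂ₓg = -I ∂ᵧg` is equivalent to
`∂ᵧg = I ∂ₓg`; differentiating these once more and using the symmetry of second derivatives gives
`∂ₓ²g + ∂ᵧ²g = -I ∂ᵧ∂ₓg + I ∂ₓ∂ᵧg = 0`, so the second-order part of `□f` vanishes. The
first-order part vanishes termwise, since `I ∂ₓg = ∂ᵧg` and `I ∂ᵧg = -∂ₓg`.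
-/

open Filter Topology

theorem Quaternion.inv_norm_im_smul_im_sq {q : ℍ[ℝ]} (hq : q.im ≠ 0) :
    (‖q.im‖⁻¹ • q.im) ^ 2 = -1 := by
  have hnorm : ‖q.im‖⁻¹ ^ 2 * (‖q.im‖ * ‖q.im‖) = 1 := by field_simp
  rw [smul_pow, im_sq, normSq_eq_norm_mul_self, smul_neg, ← coe_smul, smul_eq_mul, hnorm,
    coe_one]

theorem ContDiffAt.hasFDerivAt_fderiv {E F : Type*} [NormedAddCommGroup E] [NormedSpace ℝ E]
    [NormedAddCommGroup F] [NormedSpace ℝ F] {g : E → F} {p : E} (hg : ContDiffAt ℝ 2 g p) :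
    HasFDerivAt (fderiv ℝ g) (fderiv ℝ (fderiv ℝ g) p) p :=
  ((hg.fderiv_right (m := 1) le_rfl).differentiableAt one_ne_zero).hasFDerivAt

section PartialDerivatives

variable {E : Type*} [NormedAddCommGroup E] [NormedSpace ℝ E] {G : ℝ × ℝ → E} {x y : ℝ}

theorem HasFDerivAt.hasDerivAt_comp_prodMk_left {G' : ℝ × ℝ →L[ℝ] E}
    (hG : HasFDerivAt G G' (x, y)) : HasDerivAt (fun u => G (u, y)) (G' (1, 0)) x :=
  hG.comp_hasDerivAt x ((hasDerivAt_id x).prodMk (hasDerivAt_const x y))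

theorem HasFDerivAt.hasDerivAt_comp_prodMk_right {G' : ℝ × ℝ →L[ℝ] E}
    (hG : HasFDerivAt G G' (x, y)) : HasDerivAt (fun v => G (x, v)) (G' (0, 1)) y :=
  hG.comp_hasDerivAt y ((hasDerivAt_const y x).prodMk (hasDerivAt_id y))

theorem deriv_deriv_comp_prodMk_left (hG : ContDiffAt ℝ 2 G (x, y)) :
    deriv (deriv fun u => G (u, y)) x = fderiv ℝ (fderiv ℝ G) (x, y) (1, 0) (1, 0) := by
  have hsection : (deriv fun u => G (u, y)) =ᶠ[𝓝 x] fun u => fderiv ℝ G (u, y) (1, 0) := by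
    have hcont : ContinuousAt (fun u : ℝ => (u, y)) x := by fun_prop
    filter_upwards [hcont.eventually (hG.eventually (by simp))] with u hu
    exact ((hu.differentiableAt two_ne_zero).hasFDerivAt.hasDerivAt_comp_prodMk_left).deriv
  rw [hsection.deriv_eq]
  simpa using (hG.hasFDerivAt_fderiv.hasDerivAt_comp_prodMk_left.clm_apply
    (hasDerivAt_const x ((1 : ℝ), (0 : ℝ)))).deriv

theorem deriv_deriv_comp_prodMk_right (hG : ContDiffAt ℝ 2 G (x, y)) :
    deriv (deriv fun v => G (x, v)) y = fderiv ℝ (fderiv ℝ G) (x, y) (0, 1) (0, 1) := by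
  have hsection : (deriv fun v => G (x, v)) =ᶠ[𝓝 y] fun v => fderiv ℝ G (x, v) (0, 1) := by
    have hcont : ContinuousAt (fun v : ℝ => (x, v)) y := by fun_prop
    filter_upwards [hcont.eventually (hG.eventually (by simp))] with v hv
    exact ((hv.differentiableAt two_ne_zero).hasFDerivAt.hasDerivAt_comp_prodMk_right).deriv
  rw [hsection.deriv_eq]
  simpa using (hG.hasFDerivAt_fderiv.hasDerivAt_comp_prodMk_right.clm_apply
    (hasDerivAt_const y ((0 : ℝ), (1 : ℝ)))).deriv

end PartialDerivatives

section SliceRegular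

variable {A : Type*} [NormedRing A] [NormedAlgebra ℝ A]

def sliceBox (I : A) (G : ℝ × ℝ → A) (x y : ℝ) : A :=
  (-(1 / 4 : ℝ)) • (deriv (deriv fun u => G (u, y)) x + deriv (deriv fun v => G (x, v)) y) +
    (1 / 2 : ℝ) • (x • deriv (fun u => G (u, y)) x + y • deriv (fun v => G (x, v)) y) +
    (1 / 2 : ℝ) • (I * (x • deriv (fun v => G (x, v)) y - y • deriv (fun u => G (u, y)) x))

variable {I : A}

theorem smul_add_smul_add_mul_sub_eq_zero_of_add_mul_eq_zero (hI : I * I = -1) {a b : A}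
    (hab : a + I * b = 0) (x y : ℝ) : x • a + y • b + I * (x • b - y • a) = 0 := by
  have ha : a = -(I * b) := eq_neg_of_add_eq_zero_left hab
  have hIa : I * a = b := by rw [ha, mul_neg, ← mul_assoc, hI, neg_one_mul, neg_neg]
  rw [mul_sub, mul_smul_comm, mul_smul_comm, hIa, ha]
  module

theorem laplacian_eq_zero_of_sliceCauchyRiemann (hI : I * I = -1) {G : ℝ × ℝ → A}
    {p : ℝ × ℝ} (hG : ContDiffAt ℝ 2 G p)
    (hCR : ∀ᶠ q in 𝓝 p, fderiv ℝ G q (1, 0) + I * fderiv ℝ G q (0, 1) = 0) :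
    fderiv ℝ (fderiv ℝ G) p (1, 0) (1, 0) + fderiv ℝ (fderiv ℝ G) p (0, 1) (0, 1) = 0 := by
  set D := fderiv ℝ (fderiv ℝ G) p
  have hD : HasFDerivAt (fderiv ℝ G) D p := hG.hasFDerivAt_fderiv
  have hCR' : ∀ v, D v (1, 0) + I * D v (0, 1) = 0 := by
    have hderiv := ((hD.clm_apply (hasFDerivAt_const ((1 : ℝ), (0 : ℝ)) p)).add
      ((hD.clm_apply (hasFDerivAt_const ((0 : ℝ), (1 : ℝ)) p)).const_mul I))
    have hzero : HasFDerivAt (fun q => fderiv ℝ G q (1, 0) + I * fderiv ℝ G q (0, 1))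
        (0 : ℝ × ℝ →L[ℝ] A) p :=
      (hasFDerivAt_const 0 p).congr_of_eventuallyEq hCR
    intro v
    simpa using congrArg (· v) (hderiv.unique hzero)
  have hsymm : D (1, 0) (0, 1) = D (0, 1) (1, 0) := (hG.isSymmSndFDerivAt (by simp)) _ _
  have hxx : D (1, 0) (1, 0) = -(I * D (1, 0) (0, 1)) := eq_neg_of_add_eq_zero_left (hCR' _)
  have hyy : D (0, 1) (0, 1) = I * D (0, 1) (1, 0) := by
    have h := congrArg (I * ·) (hCR' (0, 1))
    simp only [mul_add, ← mul_assoc, hI, neg_one_mul, mul_zero] at h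
    exact (add_neg_eq_zero.mp h).symm
  rw [hxx, hyy, hsymm, neg_add_cancel]

theorem sliceBox_eq_zero_of_sliceCauchyRiemann (hI : I * I = -1) {G : ℝ × ℝ → A} {x y : ℝ}
    (hG : ContDiffAt ℝ 2 G (x, y))
    (hCR : ∀ᶠ p in 𝓝 (x, y),
      deriv (fun u => G (u, p.2)) p.1 + I * deriv (fun v => G (p.1, v)) p.2 = 0) :
    sliceBox I G x y = 0 := by
  have hCR' : ∀ᶠ p in 𝓝 (x, y), fderiv ℝ G p (1, 0) + I * fderiv ℝ G p (0, 1) = 0 := by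
    filter_upwards [hCR, hG.eventually (by simp)] with p hp hGp
    have hDp := (hGp.differentiableAt two_ne_zero).hasFDerivAt
    rwa [hDp.hasDerivAt_comp_prodMk_left.deriv, hDp.hasDerivAt_comp_prodMk_right.deriv] at hp
  have hD := (hG.differentiableAt two_ne_zero).hasFDerivAt
  rw [sliceBox, deriv_deriv_comp_prodMk_left hG, deriv_deriv_comp_prodMk_right hG,
    laplacian_eq_zero_of_sliceCauchyRiemann hI hG hCR', hD.hasDerivAt_comp_prodMk_left.deriv,
    hD.hasDerivAt_comp_prodMk_right.deriv, smul_zero, zero_add, ← smul_add,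
    smul_add_smul_add_mul_sub_eq_zero_of_add_mul_eq_zero hI hCR'.self_of_nhds, smul_zero]

end SliceRegular

/-- If `f` is slice regular on `ℍ∖ℝ` (its slice sections are `C²` and
satisfy the slice Cauchy–Riemann equation `∂g_I/∂x + I·∂g_I/∂y = 0`), then `□f = 0` on
`ℍ∖ℝ`. -/
theorem stmt12 (f : ℍ[ℝ] → ℍ[ℝ])
    (hreg : ∀ I : ℍ[ℝ], I ^ 2 = -1 →
      ContDiffOn ℝ 2 (fun p : ℝ × ℝ => f ((p.1 : ℍ[ℝ]) + p.2 • I))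
          (Set.univ ×ˢ Set.Ioi 0) ∧
        ∀ x y : ℝ, 0 < y →
          deriv (fun u : ℝ => f ((u : ℍ[ℝ]) + y • I)) x +
              I * deriv (fun v : ℝ => f ((x : ℍ[ℝ]) + v • I)) y = 0)
    (q : ℍ[ℝ]) (hq : q.im ≠ 0) : Box f q = 0 := by
  set I := ‖q.im‖⁻¹ • q.im
  have hI : I ^ 2 = -1 := inv_norm_im_smul_im_sq hq
  have hbox : Box f q = sliceBox I (fun p => f (p.1 + p.2 • I)) q.re ‖q.im‖ := rfl
  obtain ⟨hC2, hCR⟩ := hreg I hI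
  have hmem : Set.univ ×ˢ Set.Ioi 0 ∈ 𝓝 (q.re, ‖q.im‖) :=
    (isOpen_univ.prod isOpen_Ioi).mem_nhds ⟨trivial, norm_pos_iff.mpr hq⟩
  rw [hbox]
  exact sliceBox_eq_zero_of_sliceCauchyRiemann (by rwa [← sq]) (hC2.contDiffAt hmem)
    (eventually_of_mem hmem fun p hp => hCR p.1 p.2 hp.2)
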